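/- Let f : [0,1] → [0,1] be continuous on [0,1], differentiable on (0,1), with f(1) = 1, f(x) > 0 for x > 0, lim_{x→0+} f(x) = 0, and suppose there is c > 0 such that (f'(x))² / f(x) = c / x for all x ∈ (0,1), with f' ≥ 0. Then f(x) = x for all x ∈ [0,1] (and c = 1). -/

import Mathlib

/-!
With `f' ≥ 0` the ODE says `(√f)' = f' / (2√f) = √c / (2√x) = (√c · √x)'`, so
`√f - √c · √x` is constant on `[0, 1]`. It vanishes at `0` because `f 0 = 0`, and evaluating
at `1` gives `1 - √c = 0`. Hence `c = 1` and `√f = √x`.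
-/

open Real Set Filter Topology

lemma hasDerivAt_sqrt_comp_of_sq_div_eq {f : ℝ → ℝ} {f' c x : ℝ} (hx : 0 < x) (hfx : 0 < f x)
    (hf : HasDerivAt f f' x) (hf' : 0 ≤ f') (hc : 0 ≤ c) (hode : f' ^ 2 / f x = c / x) :
    HasDerivAt (fun y => √(f y)) (√c / (2 * √x)) x := by
  refine ((hasDerivAt_sqrt hfx.ne').comp x hf).congr_deriv ?_
  -- both sides are nonnegative and their squares are `c / (4 x)`
  refine (pow_left_inj₀ (by positivity) (by positivity) two_ne_zero).1 ?_
  simp only [div_pow, mul_pow, sq_sqrt hc, sq_sqrt hx.le, sq_sqrt hfx.le, one_pow]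
  field_simp at hode ⊢
  linarith

lemma eq_left_of_hasDerivAt_zero {g : ℝ → ℝ} {a b : ℝ} (hg : ContinuousOn g (Icc a b))
    (hg' : ∀ x ∈ Ioo a b, HasDerivAt g 0 x) : ∀ x ∈ Icc a b, g x = g a := by
  rintro x ⟨hax, hxb⟩
  rcases hax.eq_or_lt with rfl | hax
  · rfl
  obtain ⟨ξ, -, hξ⟩ := exists_hasDerivAt_eq_slope g (fun _ => 0) hax
    (hg.mono (Icc_subset_Icc_right hxb)) fun y hy => hg' y ⟨hy.1, hy.2.trans_le hxb⟩
  rw [eq_comm, div_eq_zero_iff, sub_eq_zero, sub_eq_zero] at hξ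
  exact hξ.resolve_right hax.ne'

theorem stmt4_general (f : ℝ → ℝ) (c : ℝ) (hc : 0 < c)
    (hcont : ContinuousOn f (Set.Icc 0 1))
    (hdiff : ∀ x ∈ Set.Ioo (0:ℝ) 1, DifferentiableAt ℝ f x)
    (hf1 : f 1 = 1)
    (hpos : ∀ x ∈ Set.Ioc (0:ℝ) 1, 0 < f x)
    (hlim : Filter.Tendsto f (nhdsWithin 0 (Set.Ioi 0)) (nhds 0))
    (hode : ∀ x ∈ Set.Ioo (0:ℝ) 1, (deriv f x) ^ 2 / f x = c / x)
    (hmono : ∀ x ∈ Set.Ioo (0:ℝ) 1, 0 ≤ deriv f x) :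
    (∀ x ∈ Set.Icc (0:ℝ) 1, f x = x) ∧ c = 1 := by
  have hf0 : f 0 = 0 := by
    have : (𝓝[Ioo 0 1] (0 : ℝ)).NeBot := left_nhdsWithin_Ioo_neBot zero_lt_one
    exact tendsto_nhds_unique ((hcont 0 (left_mem_Icc.2 zero_le_one)).mono Ioo_subset_Icc_self)
      (hlim.mono_left (nhdsWithin_mono _ Ioo_subset_Ioi_self))
  have hg' : ∀ x ∈ Ioo (0 : ℝ) 1, HasDerivAt (fun y => √(f y) - √c * √y) 0 x := fun x hx =>
    ((hasDerivAt_sqrt_comp_of_sq_div_eq hx.1 (hpos x (Ioo_subset_Ioc_self hx))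
      (hdiff x hx).hasDerivAt (hmono x hx) hc.le (hode x hx)).sub
      ((hasDerivAt_sqrt hx.1.ne').const_mul √c)).congr_deriv (by ring)
  have hg : ∀ x ∈ Icc (0 : ℝ) 1, √(f x) - √c * √x = 0 := by
    simpa [hf0] using eq_left_of_hasDerivAt_zero (by fun_prop) hg'
  have hsqrt_c : √c = 1 := by
    have := hg 1 (right_mem_Icc.2 zero_le_one)
    rwa [hf1, sqrt_one, mul_one, sub_eq_zero, eq_comm] at this
  refine ⟨fun x hx => ?_, sqrt_eq_one.1 hsqrt_c⟩
  rcases hx.1.eq_or_lt with rfl | hx0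
  · exact hf0
  have := hg x hx
  rwa [hsqrt_c, one_mul, sub_eq_zero, sqrt_inj (hpos x ⟨hx0, hx.2⟩).le hx0.le] at this

/-- The metric-compatibility ODE: if `f : [0,1] → [0,1]` is continuous, differentiable on
`(0,1)`, with `f 1 = 1`, `f > 0` on `(0,1]`, `f → 0` at `0⁺`, nondecreasing derivative sign
`f' ≥ 0`, and `(f')²/f = c/x` on `(0,1)` for some `c > 0`, then `f = id` and `c = 1`. -/
theorem stmt4 (f : ℝ → ℝ) (c : ℝ) (hc : 0 < c)
    (hcont : ContinuousOn f (Set.Icc 0 1))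
    (hmaps : ∀ x ∈ Set.Icc (0:ℝ) 1, f x ∈ Set.Icc (0:ℝ) 1)
    (hdiff : ∀ x ∈ Set.Ioo (0:ℝ) 1, DifferentiableAt ℝ f x)
    (hf1 : f 1 = 1)
    (hpos : ∀ x ∈ Set.Ioc (0:ℝ) 1, 0 < f x)
    (hlim : Filter.Tendsto f (nhdsWithin 0 (Set.Ioi 0)) (nhds 0))
    (hode : ∀ x ∈ Set.Ioo (0:ℝ) 1, (deriv f x) ^ 2 / f x = c / x)
    (hmono : ∀ x ∈ Set.Ioo (0:ℝ) 1, 0 ≤ deriv f x) :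
    (∀ x ∈ Set.Icc (0:ℝ) 1, f x = x) ∧ c = 1 :=
  stmt4_general f c hc hcont hdiff hf1 hpos hlim hode hmono
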